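/- Let g = g_{5,3,4} and let F = (α, β, γ, δ, σ) ∈ g*. Then: (1) if γ = δ = σ = 0 then Ω_F = {F}; (2) if γ = δ = 0, σ ≠ 0 then Ω_F = {(α, y, 0, 0, s) : y ∈ ℝ, σs > 0}; (3) if γ = 0, δ ≠ 0, σ = 0 then Ω_F = {(α, y, 0, t, 0) : y ∈ ℝ, δt > 0}; (4) if γ = 0, δ ≠ 0, σ ≠ 0 then Ω_F = {(α, y, 0, t, s) : y ∈ ℝ, δt > 0, δs = σt}; (5) if γ ≠ 0, δ = σ = 0 then Ω_F = {(x, y, z, 0, 0) : y ∈ ℝ, γz > 0, x = α + γ − z}; (6) if γ ≠ 0, δ = 0, σ ≠ 0 then Ω_F = {(x, y, z, 0, s) : y ∈ ℝ, σs > 0, x = α + γ − z and x = α + γ(1 − s/σ)}; (7) if γ ≠ 0, δ ≠ 0, σ = 0 then Ω_F = {(x, y, z, t, 0) : y ∈ ℝ, δt > 0, x = α + γ − z, z = γ·t/δ}; (8) if γ ≠ 0, δ ≠ 0, σ ≠ 0 then Ω_F = {(x, y, z, t, s) : y ∈ ℝ, δt > 0, x = α + γ − z, x = α + γ(1 − s/σ),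 σt = δs}. -/

import Mathlib

/-!
For U = (u₁, …, u₅) one has ad_U² = u₂ • ad_U, so exp(ad_U) = 1 + φ(u₂) • ad_U with
φ(b) = expSlope b = ∑ bⁿ / (n + 1)! = (eᵇ - 1) / b, which never vanishes. Hence F ∘ exp(ad_U) is
(α + γ - γr, β + φ(u₂) c, γr, δr, σr) with r = e^{u₂} > 0 and c = γ(u₁ - u₃) - δu₄ - σu₅.
Unless γ = δ = σ = 0 the value of c, and with it the second coordinate, is arbitrary, so the
orbit is swept out by r > 0 and a free second coordinate; each of the eight cases describes this
set after eliminating r.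
-/

/-- The Lie bracket of g_{5,3,4}: [X1,X2] = X3, [X2,X3] = X3, [X2,X4] = X4, [X2,X5] = X5,
written in coordinates with respect to the basis (X₁, X₂, X₃, X₄, X₅) (all other
brackets of basis vectors vanish); it is the bilinear extension of the structure
constants above. -/
def bracketg534 (U V : Fin 5 → ℝ) : Fin 5 → ℝ :=
  ![0, 0,
    (U 0 * V 1 - U 1 * V 0) + (U 1 * V 2 - U 2 * V 1),
    U 1 * V 3 - U 3 * V 1,
    U 1 * V 4 - U 4 * V 1]

/-- The matrix of the adjoint endomorphism ad_U = [U, ·] in the basis (X₁, ..., X₅):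
column j holds the coordinates of [U, Xⱼ]. -/
def adg534 (U : Fin 5 → ℝ) : Matrix (Fin 5) (Fin 5) ℝ :=
  Matrix.of fun i j => bracketg534 U (Pi.single j 1) i

/-- The orbit Ω_F = { F ∘ exp(ad_U) : U ∈ g } in coordinates with respect to the dual
basis: a functional F' is identified with the vector (F'(X₁), ..., F'(X₅)), so that
F ∘ exp(ad_U) corresponds to the row-vector–matrix product vecMul F (exp (ad_U)). -/
noncomputable def orbitg534 (F : Fin 5 → ℝ) : Set (Fin 5 → ℝ) :=
  Set.range fun U : Fin 5 → ℝ => Matrix.vecMul F (NormedSpace.exp (adg534 U))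

open Nat

lemma mul_mul_pos_of_ne_zero {a r : ℝ} (ha : a ≠ 0) (hr : 0 < r) : 0 < a * (a * r) := by
  rw [← mul_assoc]
  exact mul_pos (mul_self_pos.2 ha) hr

lemma div_pos_of_mul_pos {a b : ℝ} (h : 0 < a * b) : 0 < b / a := by
  have ha : a ≠ 0 := by rintro rfl; simp at h
  rw [← mul_div_mul_left b a ha]
  exact div_pos h (mul_self_pos.2 ha)

noncomputable def expSlope (b : ℝ) : ℝ := ∑' n : ℕ, b ^ n / (n + 1)!

lemma summable_pow_div_succ_factorial (b : ℝ) :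
    Summable fun n : ℕ => b ^ n / ((n + 1)! : ℝ) := by
  refine Summable.of_norm_bounded (Real.summable_pow_div_factorial |b|) fun n => ?_
  rw [Real.norm_eq_abs, abs_div, abs_pow, Nat.abs_cast]
  gcongr
  omega

lemma exp_eq_one_add_mul_expSlope (b : ℝ) : Real.exp b = 1 + b * expSlope b := by
  simp only [Real.exp_eq_exp_ℝ, NormedSpace.exp_eq_tsum_div]
  rw [(Real.summable_pow_div_factorial b).tsum_eq_zero_add, expSlope, ← tsum_mul_left]
  congr 1
  · simp
  · congr 1 with n
    rw [pow_succ]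
    field_simp

lemma expSlope_ne_zero (b : ℝ) : expSlope b ≠ 0 := by
  intro h
  have hb : b = 0 := by simpa [h] using exp_eq_one_add_mul_expSlope b
  subst hb
  rw [expSlope, tsum_eq_single 0 fun n hn => by simp [zero_pow hn]] at h
  simp at h

lemma exp_eq_one_add_expSlope_smul {A : Type*} [NormedRing A] [NormedAlgebra ℝ A]
    [CompleteSpace A] {M : A} {b : ℝ} (hM : M * M = b • M) :
    NormedSpace.exp M = 1 + expSlope b • M := by
  have hpow (n : ℕ) : M ^ (n + 1) = b ^ n • M := by
    induction n with
    | zero => simp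
    | succ n ih => rw [pow_succ, ih, smul_mul_assoc, hM, smul_smul, ← pow_succ]
  have hterm (n : ℕ) : ((n + 1)! : ℝ)⁻¹ • M ^ (n + 1) = (b ^ n / (n + 1)!) • M := by
    rw [hpow, smul_smul, div_eq_inv_mul]
  rw [← (NormedSpace.exp_series_hasSum_exp' (𝕂 := ℝ) M).tsum_eq,
    (NormedSpace.expSeries_summable' (𝕂 := ℝ) M).tsum_eq_zero_add]
  simp only [hterm, (summable_pow_div_succ_factorial b).tsum_smul_const]
  simp [expSlope]

section MatrixExp

attribute [local instance] Matrix.linftyOpNormedRing Matrix.linftyOpNormedAlgebra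

lemma adg534_eq (U : Fin 5 → ℝ) :
    adg534 U = !![0, 0, 0, 0, 0;
                  0, 0, 0, 0, 0;
                  -U 1, U 0 - U 2, U 1, 0, 0;
                  0, -U 3, 0, U 1, 0;
                  0, -U 4, 0, 0, U 1] := by
  ext i j
  fin_cases i <;> fin_cases j <;> simp [adg534, bracketg534, sub_eq_add_neg]

lemma adg534_mul_self (U : Fin 5 → ℝ) : adg534 U * adg534 U = U 1 • adg534 U := by
  rw [adg534_eq]
  ext i j
  fin_cases i <;> fin_cases j <;> simp [Matrix.mul_apply, Fin.sum_univ_five]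

lemma vecMul_exp_adg534 (α β γ δ σ : ℝ) (U : Fin 5 → ℝ) :
    Matrix.vecMul ![α, β, γ, δ, σ] (NormedSpace.exp (adg534 U)) =
      ![α + γ - γ * Real.exp (U 1),
        β + expSlope (U 1) * (γ * (U 0 - U 2) - δ * U 3 - σ * U 4),
        γ * Real.exp (U 1), δ * Real.exp (U 1), σ * Real.exp (U 1)] := by
  have hexp : NormedSpace.exp (adg534 U) = 1 + expSlope (U 1) • adg534 U :=
    exp_eq_one_add_expSlope_smul (adg534_mul_self U)
  rw [hexp, Matrix.vecMul_add, Matrix.vecMul_one, adg534_eq, exp_eq_one_add_mul_expSlope]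
  ext j
  fin_cases j <;> simp <;> ring

end MatrixExp

lemma orbitg534_zero (α β : ℝ) : orbitg534 ![α, β, 0, 0, 0] = {![α, β, 0, 0, 0]} := by
  refine Set.eq_singleton_iff_unique_mem.2 ⟨⟨0, ?_⟩, ?_⟩
  · simpa using vecMul_exp_adg534 α β 0 0 0 0
  · rintro _ ⟨U, rfl⟩
    simp [vecMul_exp_adg534]

lemma exists_eq_linear_combination {γ δ σ : ℝ} (h : γ ≠ 0 ∨ δ ≠ 0 ∨ σ ≠ 0) (b c : ℝ) :
    ∃ U : Fin 5 → ℝ, U 1 = b ∧ γ * (U 0 - U 2) - δ * U 3 - σ * U 4 = c := by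
  rcases h with hγ | hδ | hσ
  · exact ⟨![c / γ, b, 0, 0, 0], rfl, by simp [mul_div_cancel₀ c hγ]⟩
  · exact ⟨![0, b, 0, -c / δ, 0], rfl, by simp [neg_div, mul_div_cancel₀ c hδ]⟩
  · exact ⟨![0, b, 0, 0, -c / σ], rfl, by simp [neg_div, mul_div_cancel₀ c hσ]⟩

lemma orbitg534_of_ne_zero (α β : ℝ) {γ δ σ : ℝ} (h : γ ≠ 0 ∨ δ ≠ 0 ∨ σ ≠ 0) :
    orbitg534 ![α, β, γ, δ, σ] =
      {p | ∃ r > 0, ∃ y, p = ![α + γ - γ * r, y, γ * r, δ * r, σ * r]} := by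
  ext p
  constructor
  · rintro ⟨U, rfl⟩
    exact ⟨_, Real.exp_pos (U 1), _, vecMul_exp_adg534 α β γ δ σ U⟩
  · rintro ⟨r, hr, y, rfl⟩
    obtain ⟨U, hU1, hUc⟩ :=
      exists_eq_linear_combination h (Real.log r) ((y - β) / expSlope (Real.log r))
    refine ⟨U, ?_⟩
    simp only [vecMul_exp_adg534, hU1, hUc, Real.exp_log hr,
      mul_div_cancel₀ _ (expSlope_ne_zero _), add_sub_cancel]

section Orbits

variable (α β : ℝ) {γ δ σ : ℝ}

lemma orbitg534_σ (hσ : σ ≠ 0) :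
    orbitg534 ![α, β, 0, 0, σ] = {p | ∃ y s : ℝ, σ * s > 0 ∧ p = ![α, y, 0, 0, s]} := by
  rw [orbitg534_of_ne_zero α β (by simp [hσ])]
  ext p
  constructor
  · rintro ⟨r, hr, y, rfl⟩
    exact ⟨y, σ * r, mul_mul_pos_of_ne_zero hσ hr, by simp⟩
  · rintro ⟨y, s, hs, rfl⟩
    exact ⟨s / σ, div_pos_of_mul_pos hs, y, by simp [mul_div_cancel₀ s hσ]⟩

lemma orbitg534_δ (hδ : δ ≠ 0) :
    orbitg534 ![α, β, 0, δ, 0] = {p | ∃ y t : ℝ, δ * t > 0 ∧ p = ![α, y, 0, t, 0]} := by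
  rw [orbitg534_of_ne_zero α β (by simp [hδ])]
  ext p
  constructor
  · rintro ⟨r, hr, y, rfl⟩
    exact ⟨y, δ * r, mul_mul_pos_of_ne_zero hδ hr, by simp⟩
  · rintro ⟨y, t, ht, rfl⟩
    exact ⟨t / δ, div_pos_of_mul_pos ht, y, by simp [mul_div_cancel₀ t hδ]⟩

lemma orbitg534_δσ (hδ : δ ≠ 0) :
    orbitg534 ![α, β, 0, δ, σ] =
      {p | ∃ y t s : ℝ, δ * t > 0 ∧ δ * s = σ * t ∧ p = ![α, y, 0, t, s]} := by
  rw [orbitg534_of_ne_zero α β (by simp [hδ])]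
  ext p
  constructor
  · rintro ⟨r, hr, y, rfl⟩
    exact ⟨y, δ * r, σ * r, mul_mul_pos_of_ne_zero hδ hr, by ring, by simp⟩
  · rintro ⟨y, t, s, ht, hts, rfl⟩
    have hs : σ * (t / δ) = s := by rw [mul_div_assoc', ← hts, mul_div_cancel_left₀ s hδ]
    exact ⟨t / δ, div_pos_of_mul_pos ht, y, by simp [hs, mul_div_cancel₀ t hδ]⟩

lemma orbitg534_γ (hγ : γ ≠ 0) :
    orbitg534 ![α, β, γ, 0, 0] =
      {p | ∃ x y z : ℝ, γ * z > 0 ∧ x = α + γ - z ∧ p = ![x, y, z, 0, 0]} := by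
  rw [orbitg534_of_ne_zero α β (by simp [hγ])]
  ext p
  constructor
  · rintro ⟨r, hr, y, rfl⟩
    exact ⟨_, y, γ * r, mul_mul_pos_of_ne_zero hγ hr, rfl, by simp⟩
  · rintro ⟨x, y, z, hz, rfl, rfl⟩
    exact ⟨z / γ, div_pos_of_mul_pos hz, y, by simp [mul_div_cancel₀ z hγ]⟩

lemma orbitg534_γσ (hσ : σ ≠ 0) :
    orbitg534 ![α, β, γ, 0, σ] =
      {p | ∃ x y z s : ℝ, σ * s > 0 ∧ x = α + γ - z ∧ x = α + γ * (1 - s / σ) ∧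
        p = ![x, y, z, 0, s]} := by
  rw [orbitg534_of_ne_zero α β (by simp [hσ])]
  ext p
  constructor
  · rintro ⟨r, hr, y, rfl⟩
    refine ⟨_, y, γ * r, σ * r, mul_mul_pos_of_ne_zero hσ hr, rfl, ?_, by simp⟩
    rw [mul_div_cancel_left₀ r hσ]
    ring
  · rintro ⟨x, y, z, s, hs, rfl, hx, rfl⟩
    have hz : γ * (s / σ) = z := by linarith
    exact ⟨s / σ, div_pos_of_mul_pos hs, y, by simp [hz, mul_div_cancel₀ s hσ]⟩

lemma orbitg534_γδ (hδ : δ ≠ 0) :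
    orbitg534 ![α, β, γ, δ, 0] =
      {p | ∃ x y z t : ℝ, δ * t > 0 ∧ x = α + γ - z ∧ z = γ * t / δ ∧ p = ![x, y, z, t, 0]} := by
  rw [orbitg534_of_ne_zero α β (by simp [hδ])]
  ext p
  constructor
  · rintro ⟨r, hr, y, rfl⟩
    refine ⟨_, y, γ * r, δ * r, mul_mul_pos_of_ne_zero hδ hr, rfl, ?_, by simp⟩
    rw [mul_div_assoc, mul_div_cancel_left₀ r hδ]
  · rintro ⟨x, y, z, t, ht, rfl, rfl, rfl⟩
    exact ⟨t / δ, div_pos_of_mul_pos ht, y, by simp [mul_div_assoc, mul_div_cancel₀ t hδ]⟩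

lemma orbitg534_γδσ (hδ : δ ≠ 0) (hσ : σ ≠ 0) :
    orbitg534 ![α, β, γ, δ, σ] =
      {p | ∃ x y z t s : ℝ, δ * t > 0 ∧ x = α + γ - z ∧ x = α + γ * (1 - s / σ) ∧
        σ * t = δ * s ∧ p = ![x, y, z, t, s]} := by
  rw [orbitg534_of_ne_zero α β (by simp [hδ])]
  ext p
  constructor
  · rintro ⟨r, hr, y, rfl⟩
    refine ⟨_, y, γ * r, δ * r, σ * r, mul_mul_pos_of_ne_zero hδ hr, rfl, ?_, by ring, by simp⟩
    rw [mul_div_cancel_left₀ r hσ]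
    ring
  · rintro ⟨x, y, z, t, s, ht, rfl, hx, hts, rfl⟩
    have hr : s / σ = t / δ := (div_eq_div_iff hσ hδ).2 (by linarith)
    have hz : γ * (t / δ) = z := by rw [← hr]; linarith
    have hs : σ * (t / δ) = s := by rw [← hr, mul_div_cancel₀ s hσ]
    exact ⟨t / δ, div_pos_of_mul_pos ht, y, by simp [hz, hs, mul_div_cancel₀ t hδ]⟩

end Orbits

theorem kOrbits_g534 (α β γ δ σ : ℝ) :
    (γ = 0 → δ = 0 → σ = 0 → orbitg534 ![α, β, γ, δ, σ] = {![α, β, γ, δ, σ]}) ∧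
    (γ = 0 → δ = 0 → σ ≠ 0 → orbitg534 ![α, β, γ, δ, σ] = {p | ∃ y s : ℝ, σ * s > 0 ∧ p = ![α, y, 0, 0, s]}) ∧
    (γ = 0 → δ ≠ 0 → σ = 0 → orbitg534 ![α, β, γ, δ, σ] = {p | ∃ y t : ℝ, δ * t > 0 ∧ p = ![α, y, 0, t, 0]}) ∧
    (γ = 0 → δ ≠ 0 → σ ≠ 0 → orbitg534 ![α, β, γ, δ, σ] = {p | ∃ y t s : ℝ, δ * t > 0 ∧ δ * s = σ * t ∧ p = ![α, y, 0, t, s]}) ∧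
    (γ ≠ 0 → δ = 0 → σ = 0 → orbitg534 ![α, β, γ, δ, σ] = {p | ∃ x y z : ℝ, γ * z > 0 ∧ x = α + γ - z ∧ p = ![x, y, z, 0, 0]}) ∧
    (γ ≠ 0 → δ = 0 → σ ≠ 0 → orbitg534 ![α, β, γ, δ, σ] = {p | ∃ x y z s : ℝ, σ * s > 0 ∧ x = α + γ - z ∧ x = α + γ * (1 - s / σ) ∧ p = ![x, y, z, 0, s]}) ∧
    (γ ≠ 0 → δ ≠ 0 → σ = 0 → orbitg534 ![α, β, γ, δ, σ] = {p | ∃ x y z t : ℝ, δ * t > 0 ∧ x = α + γ - z ∧ z = γ * t / δ ∧ p = ![x, y, z, t, 0]}) ∧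
    (γ ≠ 0 → δ ≠ 0 → σ ≠ 0 → orbitg534 ![α, β, γ, δ, σ] = {p | ∃ x y z t s : ℝ, δ * t > 0 ∧ x = α + γ - z ∧ x = α + γ * (1 - s / σ) ∧ σ * t = δ * s ∧ p = ![x, y, z, t, s]}) := by
  refine ⟨?_, ?_, ?_, ?_, ?_, ?_, ?_, ?_⟩
  · rintro rfl rfl rfl; exact orbitg534_zero α β
  · rintro rfl rfl hσ; exact orbitg534_σ α β hσ
  · rintro rfl hδ rfl; exact orbitg534_δ α β hδ
  · rintro rfl hδ -; exact orbitg534_δσ α β hδ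
  · rintro hγ rfl rfl; exact orbitg534_γ α β hγ
  · rintro - rfl hσ; exact orbitg534_γσ α β hσ
  · rintro - hδ rfl; exact orbitg534_γδ α β hδ
  · rintro - hδ hσ; exact orbitg534_γδσ α β hδ hσ
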